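/- Let E and E' be real Hilbert spaces, X ⊆ E and Y ⊆ E' nonempty closed convex sets, and f : E × E' → ℝ a function that is μ-strongly-convex–strongly-concave on X × Y and whose saddle operator G(x,y) = (∇_x f(x,y), −∇_y f(x,y)) is ℓ-Lipschitz on X × Y, with 0 < μ ≤ ℓ. Let z* ∈ X × Y be a saddle point of f on X × Y, and set κ = ℓ/μ. Let δ ≥ 0 and let g̃ : E × E' → E × E' satisfy ‖g̃(z) − G(z)‖ ≤ δ for all z ∈ X × Y. Fix z₀ ∈ X × Y, set α = 1/(2ℓ), and define the Inexact-EG iterates z_{t+1/2} = Π_{X×Y}(z_t − α·g̃(z_t)), z_{t+1} = Π_{X×Y}(z_t − α·g̃(z_{t+1/2})) for t = 0, …, T−1. Then ‖z_T − z*‖² ≤ exp(−T/(8κ))·‖z₀ − z*‖² + (8δ²/μ)·(2/ℓ + 1/μ). -/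

import Mathlib

open RealInnerProductSpace

noncomputable section

variable {E E' : Type*} [NormedAddCommGroup E] [InnerProductSpace ℝ E] [CompleteSpace E]
  [NormedAddCommGroup E'] [InnerProductSpace ℝ E'] [CompleteSpace E']

/-- The saddle operator `G(x,y) = (∇ₓ f(x,y), −∇_y f(x,y))` on the Hilbert product
`WithLp 2 (E × E')`. -/
def saddleOp (f : E × E' → ℝ) (z : WithLp 2 (E × E')) : WithLp 2 (E × E') :=
  (WithLp.equiv 2 (E × E')).symm
    (gradient (fun u => f (u, (WithLp.equiv 2 (E × E') z).2)) (WithLp.equiv 2 (E × E') z).1,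
     -gradient (fun v => f ((WithLp.equiv 2 (E × E') z).1, v)) (WithLp.equiv 2 (E × E') z).2)

/-- `X × Y` as a subset of the Hilbert product. -/
def prodSet (X : Set E) (Y : Set E') : Set (WithLp 2 (E × E')) :=
  (WithLp.equiv 2 (E × E')) ⁻¹' (X ×ˢ Y)

/-- `p` is the metric projection of `v` onto `S`. -/
def IsProjOn {H : Type*} [NormedAddCommGroup H] (S : Set H) (v p : H) : Prop :=
  p ∈ S ∧ ∀ w ∈ S, ‖v - p‖ ≤ ‖v - w‖

/-! Each Extragradient step contracts the squared distance to `z*` up to an additive error. The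
two projection inequalities give the three-point estimate
`‖z⁺ - z*‖² ≤ ‖z - z*‖² - ‖z - w‖² - ‖w - z⁺‖² + 2α⟪g̃ w, z* - w⟫ + 2α⟪g̃ w - g̃ z, w - z⁺⟫`.
Strong monotonicity of `G` and the variational inequality `⟪G z*, w - z*⟫ ≥ 0` bound the first
inner product by `-μ‖w - z*‖²` plus an oracle error of order `δ²/μ`; with `α = 1/(2ℓ)` the
Lipschitz bound absorbs the second into `‖z - w‖² + ‖w - z⁺‖²`. Hence
`‖z⁺ - z*‖² ≤ (1 - 1/(4κ))‖z - z*‖² + O(αδ²/μ + α²δ²)`, and unrolling this recursion gives the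
claim. -/

open InnerProductSpace AffineMap

theorem ConvexOn.apply_sub_le_of_hasFDerivAt {F : Type*} [NormedAddCommGroup F] [NormedSpace ℝ F]
    {C : Set F} {g : F → ℝ} {g' : F →L[ℝ] ℝ} {x u : F} (hc : ConvexOn ℝ C g) (hx : x ∈ C)
    (hu : u ∈ C) (hg : HasFDerivAt g g' x) : g' (u - x) ≤ g u - g x := by
  let l : ℝ →ᵃ[ℝ] F := lineMap x u
  have hφ : HasDerivAt (g ∘ l) (g' (u - x)) 0 :=
    (lineMap_apply_zero (k := ℝ) x u ▸ hg).comp_hasDerivAt 0 hasDerivAt_lineMap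
  simpa [l, slope_def_field] using
    (hc.comp_affineMap l).le_slope_of_hasDerivAt (by simpa [l]) (by simpa [l]) one_pos hφ

section HilbertSpace

variable {H : Type*} [NormedAddCommGroup H] [InnerProductSpace ℝ H] [CompleteSpace H]

theorem HasGradientAt.neg {g : H → ℝ} {g' x : H} (h : HasGradientAt g g' x) :
    HasGradientAt (fun v => -g v) (-g') x := by
  rw [hasGradientAt_iff_hasFDerivAt, map_neg]
  exact h.hasFDerivAt.neg

theorem inner_gradient_add_sq_le_of_convexOn_sub_sq {C : Set H} {g : H → ℝ} {μ : ℝ} {g' x u : H}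
    (hc : ConvexOn ℝ C fun v => g v - μ / 2 * ‖v‖ ^ 2) (hx : x ∈ C) (hu : u ∈ C)
    (hg : HasGradientAt g g' x) : ⟪g', u - x⟫ + μ / 2 * ‖u - x‖ ^ 2 ≤ g u - g x := by
  have hq := hg.hasFDerivAt.sub ((hasStrictFDerivAt_norm_sq x).hasFDerivAt.const_mul (μ / 2))
  have := hc.apply_sub_le_of_hasFDerivAt hx hu hq
  simp only [sub_apply, toDual_apply_apply, smul_apply, coe_innerSL_apply, nsmul_eq_mul,
    Nat.cast_ofNat, smul_eq_mul, inner_sub_right, real_inner_self_eq_norm_sq] at this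
  rw [norm_sub_sq_real, inner_sub_right, real_inner_comm x u]
  linarith

theorem IsMinOn.inner_gradient_nonneg {C : Set H} {g : H → ℝ} {g' x u : H} (hC : Convex ℝ C)
    (hmin : IsMinOn g C x) (hx : x ∈ C) (hu : u ∈ C) (hg : HasGradientAt g g' x) :
    0 ≤ ⟪g', u - x⟫ := by
  simpa only [toDual_apply_apply] using
    hmin.localize.hasFDerivWithinAt_nonneg hg.hasFDerivAt.hasFDerivWithinAt
      (sub_mem_posTangentConeAt_of_segment_subset (hC.segment_subset hx hu))

end HilbertSpace

theorem sq_norm_sub_le_of_approx_lipschitz {V W : Type*} [SeminormedAddCommGroup V]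
    [SeminormedAddCommGroup W] {S : Set V} {G g : V → W} {ℓ δ : ℝ}
    (hlip : ∀ z₁ ∈ S, ∀ z₂ ∈ S, ‖G z₁ - G z₂‖ ≤ ℓ * ‖z₁ - z₂‖)
    (hg : ∀ z ∈ S, ‖g z - G z‖ ≤ δ) {a b : V} (ha : a ∈ S) (hb : b ∈ S) :
    ‖g b - g a‖ ^ 2 ≤ 2 * ℓ ^ 2 * ‖b - a‖ ^ 2 + 8 * δ ^ 2 := by
  have h : ‖g b - g a‖ ≤ ℓ * ‖b - a‖ + 2 * δ := by
    calc ‖g b - g a‖ ≤ ‖g b - G b‖ + ‖G b - G a‖ + ‖G a - g a‖ :=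
          by simpa only [dist_eq_norm] using dist_triangle4 (g b) (G b) (G a) (g a)
      _ ≤ δ + ℓ * ‖b - a‖ + δ := by
          gcongr
          · exact hg b hb
          · exact hlip b hb a ha
          · rw [norm_sub_rev]; exact hg a ha
      _ = ℓ * ‖b - a‖ + 2 * δ := by ring
  calc ‖g b - g a‖ ^ 2 ≤ (ℓ * ‖b - a‖ + 2 * δ) ^ 2 := pow_le_pow_left₀ (norm_nonneg _) h 2
    _ ≤ 2 * ((ℓ * ‖b - a‖) ^ 2 + (2 * δ) ^ 2) := add_sq_le
    _ = 2 * ℓ ^ 2 * ‖b - a‖ ^ 2 + 8 * δ ^ 2 := by ring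

section Extragradient

variable {H : Type*} [NormedAddCommGroup H] [InnerProductSpace ℝ H] {S : Set H}

theorem IsProjOn.inner_le_zero {v p w : H} (hS : Convex ℝ S) (h : IsProjOn S v p) (hw : w ∈ S) :
    ⟪v - p, w - p⟫ ≤ 0 := by
  have : Nonempty S := ⟨⟨p, h.1⟩⟩
  refine (norm_eq_iInf_iff_real_inner_le_zero hS h.1).1 (le_antisymm ?_ ?_) w hw
  · exact le_ciInf fun w => h.2 w w.2
  · exact ciInf_le ⟨0, by rintro _ ⟨w, rfl⟩; exact norm_nonneg _⟩ (⟨p, h.1⟩ : S)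

theorem extragradient_three_point (hS : Convex ℝ S) {a b c zs ga gb : H} {α : ℝ}
    (hb : IsProjOn S (a - α • ga) b) (hc : IsProjOn S (a - α • gb) c) (hzs : zs ∈ S) :
    ‖c - zs‖ ^ 2 ≤ ‖a - zs‖ ^ 2 - ‖a - b‖ ^ 2 - ‖b - c‖ ^ 2
      + 2 * α * ⟪gb, zs - b⟫ + 2 * α * ⟪gb - ga, b - c⟫ := by
  have hb' : ⟪(a - b) - α • ga, -(b - c)⟫ ≤ 0 := by
    convert hb.inner_le_zero hS hc.1 using 2 <;> abel
  have hc' : ⟪(a - c) - α • gb, -(c - zs)⟫ ≤ 0 := by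
    convert hc.inner_le_zero hS hzs using 2 <;> abel
  rw [inner_neg_right, inner_sub_left, real_inner_smul_left] at hb' hc'
  have hac : ‖a - c‖ ^ 2 = ‖a - b‖ ^ 2 + 2 * ⟪a - b, b - c⟫ + ‖b - c‖ ^ 2 := by
    rw [← norm_add_sq_real, sub_add_sub_cancel]
  have haz : ‖a - zs‖ ^ 2 = ‖a - c‖ ^ 2 + 2 * ⟪a - c, c - zs⟫ + ‖c - zs‖ ^ 2 := by
    rw [← norm_add_sq_real, sub_add_sub_cancel]
  have hgb : ⟪gb, c - zs⟫ + ⟪gb, zs - b⟫ + ⟪gb, b - c⟫ = 0 := by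
    rw [← inner_add_right, ← inner_add_right]; simp
  rw [inner_sub_left]
  linear_combination 2 * hb' + 2 * hc' - haz - hac - 2 * α * hgb

theorem le_inner_of_strongMono_of_norm_sub_le {g G d : H} {μ δ : ℝ} (hμ : 0 < μ)
    (hG : μ * ‖d‖ ^ 2 ≤ ⟪G, d⟫) (hg : ‖g - G‖ ≤ δ) :
    μ / 2 * ‖d‖ ^ 2 - δ ^ 2 / (2 * μ) ≤ ⟪g, d⟫ := by
  have herr : -(δ * ‖d‖) ≤ ⟪g - G, d⟫ :=
    (neg_le_neg (mul_le_mul_of_nonneg_right hg (norm_nonneg d))).trans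
      (neg_le_of_abs_le (abs_real_inner_le_norm _ _))
  have hamgm : δ * ‖d‖ ≤ μ / 2 * ‖d‖ ^ 2 + δ ^ 2 / (2 * μ) := by
    have : μ / 2 * ‖d‖ ^ 2 + δ ^ 2 / (2 * μ) - δ * ‖d‖ = (μ * ‖d‖ - δ) ^ 2 / (2 * μ) := by
      field_simp; ring
    linarith [show 0 ≤ (μ * ‖d‖ - δ) ^ 2 / (2 * μ) by positivity]
  rw [inner_sub_left] at herr
  linarith

theorem extragradient_step_sq_dist_le (hS : Convex ℝ S) {G g : H → H} {μ ℓ δ α : ℝ}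
    {zs a b c : H} (hμ : 0 < μ) (hμℓ : μ ≤ ℓ) (hα : 0 < α) (hαℓ : α * ℓ ≤ 1 / 2)
    (hG : ∀ z ∈ S, μ * ‖z - zs‖ ^ 2 ≤ ⟪G z, z - zs⟫)
    (hlip : ∀ z₁ ∈ S, ∀ z₂ ∈ S, ‖G z₁ - G z₂‖ ≤ ℓ * ‖z₁ - z₂‖)
    (hg : ∀ z ∈ S, ‖g z - G z‖ ≤ δ) (hzs : zs ∈ S) (ha : a ∈ S)
    (hb : IsProjOn S (a - α • g a) b) (hc : IsProjOn S (a - α • g b) c) :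
    ‖c - zs‖ ^ 2 ≤ (1 - α * μ / 2) * ‖a - zs‖ ^ 2 + (8 * α ^ 2 + α / μ) * δ ^ 2 := by
  have hthree := extragradient_three_point hS hb hc hzs
  have hmono : 2 * α * (μ / 2 * ‖b - zs‖ ^ 2 - δ ^ 2 / (2 * μ)) ≤ 2 * α * ⟪g b, b - zs⟫ :=
    mul_le_mul_of_nonneg_left
      (le_inner_of_strongMono_of_norm_sub_le hμ (hG b hb.1) (hg b hb.1)) (by positivity)
  have hcross : 2 * α * ⟪g b - g a, b - c⟫ ≤ α ^ 2 * ‖g b - g a‖ ^ 2 + ‖b - c‖ ^ 2 := by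
    have := two_mul_le_add_sq (α * ‖g b - g a‖) ‖b - c‖
    have := mul_le_mul_of_nonneg_left (real_inner_le_norm (g b - g a) (b - c)) hα.le
    linarith
  have hlipb : α ^ 2 * ‖g b - g a‖ ^ 2 ≤ 1 / 2 * ‖a - b‖ ^ 2 + 8 * α ^ 2 * δ ^ 2 := by
    have hαℓ2 : (α * ℓ) ^ 2 ≤ 1 / 4 := by nlinarith [mul_pos hα (hμ.trans_le hμℓ)]
    have := mul_le_mul_of_nonneg_left (sq_norm_sub_le_of_approx_lipschitz hlip hg ha hb.1)
      (sq_nonneg α)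
    rw [norm_sub_rev b a] at this
    linarith [mul_le_mul_of_nonneg_right hαℓ2 (sq_nonneg ‖a - b‖)]
  have hsplit : α * μ / 2 * ‖a - zs‖ ^ 2 ≤ 1 / 2 * ‖a - b‖ ^ 2 + α * μ * ‖b - zs‖ ^ 2 := by
    have htri : ‖a - zs‖ ^ 2 ≤ 2 * (‖a - b‖ ^ 2 + ‖b - zs‖ ^ 2) :=
      (pow_le_pow_left₀ (norm_nonneg _) (norm_sub_le_norm_sub_add_norm_sub a b zs) 2).trans
        add_sq_le
    have hαμ : α * μ ≤ 1 / 2 := (mul_le_mul_of_nonneg_left hμℓ hα.le).trans hαℓ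
    linarith [mul_le_mul_of_nonneg_left htri (by positivity : (0 : ℝ) ≤ α * μ / 2),
      mul_le_mul_of_nonneg_right hαμ (sq_nonneg ‖a - b‖)]
  rw [← neg_sub b zs, inner_neg_right] at hthree
  have : α * (δ ^ 2 / (2 * μ)) = α / μ * δ ^ 2 / 2 := by field_simp
  linarith

end Extragradient

theorem le_pow_mul_add_div_of_le_mul_add {u : ℕ → ℝ} {r c : ℝ} (hr : 0 ≤ r) (hr1 : r < 1)
    (hc : 0 ≤ c) {T : ℕ} (h : ∀ t < T, u (t + 1) ≤ r * u t + c) :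
    u T ≤ r ^ T * u 0 + c / (1 - r) := by
  have hr1' : 1 - r ≠ 0 := by linarith
  induction T with
  | zero => simpa using div_nonneg hc (by linarith : 0 ≤ 1 - r)
  | succ T ih =>
    calc u (T + 1) ≤ r * u T + c := h T T.lt_succ_self
      _ ≤ r * (r ^ T * u 0 + c / (1 - r)) + c := by
          gcongr; exact ih fun t ht => h t (by omega)
      _ = r ^ (T + 1) * u 0 + c / (1 - r) := by field_simp; ring

theorem one_sub_inv_four_mul_pow_le_exp {κ : ℝ} (hκ : 1 / 4 ≤ κ) (T : ℕ) :
    (1 - 1 / (4 * κ)) ^ T ≤ Real.exp (-(T : ℝ) / (8 * κ)) := by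
  have hκ0 : 0 < κ := by linarith
  calc (1 - 1 / (4 * κ)) ^ T ≤ Real.exp (-(1 / (4 * κ))) ^ T := by
        refine pow_le_pow_left₀ ?_ (Real.one_sub_le_exp_neg _) T
        rw [sub_nonneg, div_le_one (by positivity)]
        linarith
    _ = Real.exp (-(T : ℝ) / (4 * κ)) := by rw [← Real.exp_nat_mul]; ring_nf
    _ ≤ Real.exp (-(T : ℝ) / (8 * κ)) := by
        rw [Real.exp_le_exp, neg_div, neg_div, neg_le_neg_iff]
        gcongr
        norm_num

theorem convex_prodSet {A B : Type*} [NormedAddCommGroup A] [InnerProductSpace ℝ A]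
    [NormedAddCommGroup B] [InnerProductSpace ℝ B] {X : Set A} {Y : Set B}
    (hX : Convex ℝ X) (hY : Convex ℝ Y) : Convex ℝ (prodSet X Y) :=
  (hX.prod hY).linear_preimage (WithLp.linearEquiv 2 ℝ (A × B)).toLinearMap

theorem mul_sq_norm_sub_le_inner_saddleOp_sub {X : Set E} {Y : Set E'} {f : E × E' → ℝ} {μ : ℝ}
    (hdx : ∀ x ∈ X, ∀ y ∈ Y, DifferentiableAt ℝ (fun u => f (u, y)) x)
    (hdy : ∀ x ∈ X, ∀ y ∈ Y, DifferentiableAt ℝ (fun v => f (x, v)) y)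
    (hscx : ∀ y ∈ Y, ConvexOn ℝ X (fun x => f (x, y) - μ / 2 * ‖x‖ ^ 2))
    (hscy : ∀ x ∈ X, ConvexOn ℝ Y (fun y => -f (x, y) - μ / 2 * ‖y‖ ^ 2))
    {z₁ z₂ : WithLp 2 (E × E')} (h₁ : z₁ ∈ prodSet X Y) (h₂ : z₂ ∈ prodSet X Y) :
    μ * ‖z₁ - z₂‖ ^ 2 ≤ ⟪saddleOp f z₁ - saddleOp f z₂, z₁ - z₂⟫ := by
  obtain ⟨⟨x₁, y₁⟩⟩ := z₁
  obtain ⟨⟨x₂, y₂⟩⟩ := z₂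
  obtain ⟨hx₁, hy₁⟩ : x₁ ∈ X ∧ y₁ ∈ Y := h₁
  obtain ⟨hx₂, hy₂⟩ : x₂ ∈ X ∧ y₂ ∈ Y := h₂
  have hx₁₂ := inner_gradient_add_sq_le_of_convexOn_sub_sq (hscx y₁ hy₁) hx₁ hx₂
    (hdx x₁ hx₁ y₁ hy₁).hasGradientAt
  have hx₂₁ := inner_gradient_add_sq_le_of_convexOn_sub_sq (hscx y₂ hy₂) hx₂ hx₁
    (hdx x₂ hx₂ y₂ hy₂).hasGradientAt
  have hy₁₂ := inner_gradient_add_sq_le_of_convexOn_sub_sq (hscy x₁ hx₁) hy₁ hy₂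
    (hdy x₁ hx₁ y₁ hy₁).hasGradientAt.neg
  have hy₂₁ := inner_gradient_add_sq_le_of_convexOn_sub_sq (hscy x₂ hx₂) hy₂ hy₁
    (hdy x₂ hx₂ y₂ hy₂).hasGradientAt.neg
  rw [← neg_sub x₁, inner_neg_right, norm_neg] at hx₁₂
  rw [← neg_sub y₁, inner_neg_right, norm_neg] at hy₁₂
  rw [WithLp.prod_norm_sq_eq_of_L2, WithLp.prod_inner_apply]
  change μ * (‖x₁ - x₂‖ ^ 2 + ‖y₁ - y₂‖ ^ 2) ≤
    ⟪gradient (fun u => f (u, y₁)) x₁ - gradient (fun u => f (u, y₂)) x₂, x₁ - x₂⟫ +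
    ⟪-gradient (fun v => f (x₁, v)) y₁ - -gradient (fun v => f (x₂, v)) y₂, y₁ - y₂⟫
  rw [inner_sub_left, inner_sub_left]
  linarith

theorem IsSaddlePointOn.inner_saddleOp_sub_nonneg {X : Set E} {Y : Set E'} {f : E × E' → ℝ}
    {zs : WithLp 2 (E × E')}
    (hsaddle : IsSaddlePointOn X Y (Function.curry f) zs.fst zs.snd)
    (hXcv : Convex ℝ X) (hYcv : Convex ℝ Y)
    (hdx : ∀ x ∈ X, ∀ y ∈ Y, DifferentiableAt ℝ (fun u => f (u, y)) x)
    (hdy : ∀ x ∈ X, ∀ y ∈ Y, DifferentiableAt ℝ (fun v => f (x, v)) y)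
    (hzs : zs ∈ prodSet X Y) {z : WithLp 2 (E × E')} (hz : z ∈ prodSet X Y) :
    0 ≤ ⟪saddleOp f zs, z - zs⟫ := by
  obtain ⟨⟨xs, ys⟩⟩ := zs
  obtain ⟨⟨x, y⟩⟩ := z
  obtain ⟨hxs, hys⟩ : xs ∈ X ∧ ys ∈ Y := hzs
  obtain ⟨hx, hy⟩ : x ∈ X ∧ y ∈ Y := hz
  have h₁ : 0 ≤ ⟪gradient (fun u => f (u, ys)) xs, x - xs⟫ :=
    IsMinOn.inner_gradient_nonneg hXcv (isMinOn_iff.2 fun p hp => hsaddle p hp ys hys) hxs hx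
      (hdx xs hxs ys hys).hasGradientAt
  have h₂ : 0 ≤ ⟪-gradient (fun v => f (xs, v)) ys, y - ys⟫ :=
    IsMinOn.inner_gradient_nonneg (g := fun v => -f (xs, v)) hYcv
      (isMinOn_iff.2 fun q hq => neg_le_neg (hsaddle xs hxs q hq)) hys hy
      (hdy xs hxs ys hys).hasGradientAt.neg
  rw [WithLp.prod_inner_apply]
  exact add_nonneg h₁ h₂

theorem mul_sq_norm_sub_le_inner_saddleOp {X : Set E} {Y : Set E'} {f : E × E' → ℝ} {μ : ℝ}
    {zs : WithLp 2 (E × E')}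
    (hsaddle : IsSaddlePointOn X Y (Function.curry f) zs.fst zs.snd)
    (hXcv : Convex ℝ X) (hYcv : Convex ℝ Y)
    (hdx : ∀ x ∈ X, ∀ y ∈ Y, DifferentiableAt ℝ (fun u => f (u, y)) x)
    (hdy : ∀ x ∈ X, ∀ y ∈ Y, DifferentiableAt ℝ (fun v => f (x, v)) y)
    (hscx : ∀ y ∈ Y, ConvexOn ℝ X (fun x => f (x, y) - μ / 2 * ‖x‖ ^ 2))
    (hscy : ∀ x ∈ X, ConvexOn ℝ Y (fun y => -f (x, y) - μ / 2 * ‖y‖ ^ 2))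
    (hzs : zs ∈ prodSet X Y) {z : WithLp 2 (E × E')} (hz : z ∈ prodSet X Y) :
    μ * ‖z - zs‖ ^ 2 ≤ ⟪saddleOp f z, z - zs⟫ := by
  have hmono := mul_sq_norm_sub_le_inner_saddleOp_sub hdx hdy hscx hscy hz hzs
  have hvi := hsaddle.inner_saddleOp_sub_nonneg hXcv hYcv hdx hdy hzs hz
  rw [inner_sub_left] at hmono
  linarith

theorem inexact_eg_scsc_convergence_general
    (X : Set E) (Y : Set E') (hXcv : Convex ℝ X) (hYcv : Convex ℝ Y)
    (f : E × E' → ℝ) (μ ℓ : ℝ) (hμ : 0 < μ) (hμℓ : μ ≤ ℓ)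
    (hdx : ∀ x ∈ X, ∀ y ∈ Y, DifferentiableAt ℝ (fun u => f (u, y)) x)
    (hdy : ∀ x ∈ X, ∀ y ∈ Y, DifferentiableAt ℝ (fun v => f (x, v)) y)
    (hscx : ∀ y ∈ Y, ConvexOn ℝ X (fun x => f (x, y) - μ / 2 * ‖x‖ ^ 2))
    (hscy : ∀ x ∈ X, ConvexOn ℝ Y (fun y => -f (x, y) - μ / 2 * ‖y‖ ^ 2))
    (hlip : ∀ z₁ ∈ prodSet X Y, ∀ z₂ ∈ prodSet X Y,
      ‖saddleOp f z₁ - saddleOp f z₂‖ ≤ ℓ * ‖z₁ - z₂‖)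
    (zs : WithLp 2 (E × E')) (hzsS : zs ∈ prodSet X Y)
    (hsaddle : ∀ x ∈ X, ∀ y ∈ Y,
      f ((WithLp.equiv 2 (E × E') zs).1, y) ≤ f (WithLp.equiv 2 (E × E') zs) ∧
      f (WithLp.equiv 2 (E × E') zs) ≤ f (x, (WithLp.equiv 2 (E × E') zs).2))
    (κ : ℝ) (hκ : κ = ℓ / μ) (δ : ℝ)
    (gt : WithLp 2 (E × E') → WithLp 2 (E × E'))
    (hgt : ∀ z ∈ prodSet X Y, ‖gt z - saddleOp f z‖ ≤ δ)
    (α : ℝ) (hα : α = 1 / (2 * ℓ))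
    (T : ℕ) (z w : ℕ → WithLp 2 (E × E')) (hz0 : z 0 ∈ prodSet X Y)
    (hhalf : ∀ t < T, IsProjOn (prodSet X Y) (z t - α • gt (z t)) (w t))
    (hfull : ∀ t < T, IsProjOn (prodSet X Y) (z t - α • gt (w t)) (z (t + 1))) :
    ‖z T - zs‖ ^ 2 ≤
      Real.exp (-(T : ℝ) / (8 * κ)) * ‖z 0 - zs‖ ^ 2 +
        8 * δ ^ 2 / μ * (2 / ℓ + 1 / μ) := by
  have hℓ : 0 < ℓ := hμ.trans_le hμℓ
  have hα0 : 0 < α := by rw [hα]; positivity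
  have hαℓ : α * ℓ = 1 / 2 := by rw [hα]; field_simp
  have hsp : IsSaddlePointOn X Y (Function.curry f) zs.fst zs.snd := fun x hx y hy =>
    (hsaddle x hx y hy).1.trans (hsaddle x hx y hy).2
  have hzS : ∀ t < T, z t ∈ prodSet X Y
    | 0, _ => hz0
    | t + 1, ht => (hfull t (by omega)).1
  have hstep (t : ℕ) (ht : t < T) : ‖z (t + 1) - zs‖ ^ 2 ≤
      (1 - α * μ / 2) * ‖z t - zs‖ ^ 2 + (8 * α ^ 2 + α / μ) * δ ^ 2 :=
    extragradient_step_sq_dist_le (convex_prodSet hXcv hYcv) hμ hμℓ hα0 hαℓ.le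
      (fun _ hz' => mul_sq_norm_sub_le_inner_saddleOp hsp hXcv hYcv hdx hdy hscx hscy hzsS hz')
      hlip hgt hzsS (hzS t ht) (hhalf t ht) (hfull t ht)
  have hrate : α * μ / 2 = 1 / (4 * κ) := by rw [hα, hκ]; field_simp; norm_num
  have hκ1 : 1 / 4 ≤ κ := by rw [hκ, le_div_iff₀ hμ]; linarith
  have hbias : (8 * α ^ 2 + α / μ) * δ ^ 2 / (1 - (1 - α * μ / 2)) =
      8 * δ ^ 2 / μ * (2 / ℓ + 1 / μ) - (8 / (μ * ℓ) + 6 / μ ^ 2) * δ ^ 2 := by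
    rw [sub_sub_cancel, hα]; field_simp; ring
  calc ‖z T - zs‖ ^ 2
      ≤ (1 - α * μ / 2) ^ T * ‖z 0 - zs‖ ^ 2
          + (8 * α ^ 2 + α / μ) * δ ^ 2 / (1 - (1 - α * μ / 2)) :=
        le_pow_mul_add_div_of_le_mul_add (u := fun t => ‖z t - zs‖ ^ 2) (by nlinarith)
          (by nlinarith) (by positivity) hstep
    _ ≤ Real.exp (-(T : ℝ) / (8 * κ)) * ‖z 0 - zs‖ ^ 2 + 8 * δ ^ 2 / μ * (2 / ℓ + 1 / μ) := by
        rw [hbias, hrate]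
        gcongr
        · exact one_sub_inv_four_mul_pow_le_exp hκ1 T
        · exact sub_le_self _ (by positivity)

/-- Lemma 4.4 / C.2: Inexact-EG for strongly-convex–strongly-concave
problems.  With `κ = ℓ/μ`, stepsize `α = 1/(2ℓ)` and a `δ`-inexact gradient oracle `g̃`, the
Extragradient iterates `z_{t+1/2} = Π_{X×Y}(z_t − α g̃(z_t))`,
`z_{t+1} = Π_{X×Y}(z_t − α g̃(z_{t+1/2}))` satisfy
`‖z_T − z*‖² ≤ exp(−T/(8κ))·‖z₀ − z*‖² + (8δ²/μ)·(2/ℓ + 1/μ)`. -/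
theorem inexact_eg_scsc_convergence
    (X : Set E) (Y : Set E') (hXne : X.Nonempty) (hYne : Y.Nonempty)
    (hXcl : IsClosed X) (hYcl : IsClosed Y) (hXcv : Convex ℝ X) (hYcv : Convex ℝ Y)
    (f : E × E' → ℝ) (μ ℓ : ℝ) (hμ : 0 < μ) (hμℓ : μ ≤ ℓ)
    (hdx : ∀ x ∈ X, ∀ y ∈ Y, DifferentiableAt ℝ (fun u => f (u, y)) x)
    (hdy : ∀ x ∈ X, ∀ y ∈ Y, DifferentiableAt ℝ (fun v => f (x, v)) y)
    (hscx : ∀ y ∈ Y, ConvexOn ℝ X (fun x => f (x, y) - μ / 2 * ‖x‖ ^ 2))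
    (hscy : ∀ x ∈ X, ConvexOn ℝ Y (fun y => -f (x, y) - μ / 2 * ‖y‖ ^ 2))
    (hlip : ∀ z₁ ∈ prodSet X Y, ∀ z₂ ∈ prodSet X Y,
      ‖saddleOp f z₁ - saddleOp f z₂‖ ≤ ℓ * ‖z₁ - z₂‖)
    (zs : WithLp 2 (E × E')) (hzsS : zs ∈ prodSet X Y)
    (hsaddle : ∀ x ∈ X, ∀ y ∈ Y,
      f ((WithLp.equiv 2 (E × E') zs).1, y) ≤ f (WithLp.equiv 2 (E × E') zs) ∧
      f (WithLp.equiv 2 (E × E') zs) ≤ f (x, (WithLp.equiv 2 (E × E') zs).2))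
    (κ : ℝ) (hκ : κ = ℓ / μ)
    (δ : ℝ) (hδ : 0 ≤ δ)
    (gt : WithLp 2 (E × E') → WithLp 2 (E × E'))
    (hgt : ∀ z ∈ prodSet X Y, ‖gt z - saddleOp f z‖ ≤ δ)
    (α : ℝ) (hα : α = 1 / (2 * ℓ))
    (T : ℕ) (z w : ℕ → WithLp 2 (E × E')) (hz0 : z 0 ∈ prodSet X Y)
    (hhalf : ∀ t < T, IsProjOn (prodSet X Y) (z t - α • gt (z t)) (w t))
    (hfull : ∀ t < T, IsProjOn (prodSet X Y) (z t - α • gt (w t)) (z (t + 1))) :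
    ‖z T - zs‖ ^ 2 ≤
      Real.exp (-(T : ℝ) / (8 * κ)) * ‖z 0 - zs‖ ^ 2 +
        8 * δ ^ 2 / μ * (2 / ℓ + 1 / μ) :=
  inexact_eg_scsc_convergence_general X Y hXcv hYcv f μ ℓ hμ hμℓ hdx hdy hscx hscy hlip zs hzsS
    hsaddle κ hκ δ gt hgt α hα T z w hz0 hhalf hfull
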